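/- All zeros of the polynomial s ↦ ₂F₁(-n, (μ+s)/2; μ+1/2; 2) (a polynomial of degree n in s) lie on the critical line Re(s) = 1/2, for every real μ > -1/2 and nonnegative integer n. -/

import Mathlib

/-- Rising factorial (Pochhammer symbol) on ℂ. -/
noncomputable def ascC (a : ℂ) (k : ℕ) : ℂ := ∏ i ∈ Finset.range k, (a + i)

/-- Terminating Gauss hypergeometric sum `₂F₁(-n, b; c; 2)`. -/
noncomputable def F2 (n : ℕ) (b c : ℂ) : ℂ :=
  ∑ j ∈ Finset.range (n + 1),
    ascC (-(n : ℂ)) j * ascC b j / ascC c j * 2 ^ j / (j.factorial : ℂ)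

/-!
With `c = μ + 1/2` and `b = (μ + s)/2`, Zeilberger-style telescoping of the summands gives the
contiguous relation `(c + n + 1) Fₙ₊₂ = (c - 2b) Fₙ₊₁ + (n + 1) Fₙ`, where `c - 2b = 1/2 - s`.
Hence `(c)ₙ Fₙ = Qₙ(1/2 - s)` for the monic polynomials `Q₀ = 1`, `Q₁ = t`,
`Qₙ₊₂ = t Qₙ₊₁ + βₙ Qₙ` with `βₙ = (n + 1)(c + n) > 0`. Such polynomials vanish only on the
imaginary axis: if `Re t ≠ 0`, then `Re t · Re (Qₙ₊₁(t) · conj Qₙ(t)) > 0` propagates along the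
recurrence, because the new term is `(Re t)² |Qₙ₊₁(t)|²` plus `βₙ` times the old one.
-/

open Finset Polynomial

theorem ascC_zero (a : ℂ) : ascC a 0 = 1 := prod_range_zero _

theorem ascC_succ (a : ℂ) (k : ℕ) : ascC a (k + 1) = ascC a k * (a + k) := prod_range_succ _ _

theorem ascC_mul_add (a : ℂ) (k : ℕ) : ascC a k * (a + k) = a * ascC (a + 1) k := by
  rw [← ascC_succ, ascC, prod_range_succ', ascC, mul_comm]
  push_cast
  simp only [add_zero, add_assoc, add_comm (1 : ℂ)]

theorem ascC_neg_natCast_eq_zero {n k : ℕ} (h : n < k) : ascC (-n) k = 0 :=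
  prod_eq_zero (mem_range.mpr h) (by simp)

theorem ascC_ne_zero {c : ℂ} (hc : ∀ k : ℕ, c + k ≠ 0) (k : ℕ) : ascC c k ≠ 0 :=
  prod_ne_zero_iff.mpr fun i _ => hc i

theorem add_natCast_ne_zero_of_re_pos {c : ℂ} (hc : 0 < c.re) (k : ℕ) : c + k ≠ 0 := fun h => by
  have := congrArg Complex.re h
  simp only [Complex.add_re, Complex.natCast_re, Complex.zero_re] at this
  linarith [(k.cast_nonneg : (0 : ℝ) ≤ k)]

noncomputable def F2term (n : ℕ) (b c : ℂ) (j : ℕ) : ℂ :=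
  ascC (-(n : ℂ)) j * ascC b j / ascC c j * 2 ^ j / (j.factorial : ℂ)

theorem F2term_eq_zero {n j : ℕ} (b c : ℂ) (h : n < j) : F2term n b c j = 0 := by
  simp [F2term, ascC_neg_natCast_eq_zero h]

theorem F2_eq_sum_F2term {n N : ℕ} (b c : ℂ) (h : n + 1 ≤ N) :
    F2 n b c = ∑ j ∈ range N, F2term n b c j :=
  sum_subset (range_subset_range.mpr h) fun _ _ hj =>
    F2term_eq_zero b c (by simpa using hj)

theorem F2term_mul_succ_left (n : ℕ) (b c : ℂ) (j : ℕ) :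
    F2term n b c j * (n + 1) = F2term (n + 1) b c j * (n + 1 - j) := by
  have h := ascC_mul_add (-(n + 1 : ℂ)) j
  rw [show -(n + 1 : ℂ) + 1 = -n by ring] at h
  simp only [F2term, Nat.cast_succ]
  linear_combination (ascC b j / ascC c j * 2 ^ j / j.factorial) * h

theorem F2term_succ_mul {c : ℂ} (hc : ∀ k : ℕ, c + k ≠ 0) (n : ℕ) (b : ℂ) (j : ℕ) :
    F2term n b c (j + 1) * ((c + j) * (j + 1)) = F2term n b c j * (2 * (j - n) * (b + j)) := by
  have hcj := ascC_ne_zero hc j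
  have := hc j
  simp only [F2term, ascC_succ, Nat.factorial_succ, pow_succ]
  push_cast
  field_simp
  ring

theorem F2_contiguous {c : ℂ} (hc : ∀ k : ℕ, c + k ≠ 0) (n : ℕ) (b : ℂ) :
    (c + n + 1) * F2 (n + 2) b c = (c - 2 * b) * F2 (n + 1) b c + (n + 1) * F2 n b c := by
  set T := fun m j => F2term m b c j
  set G : ℕ → ℂ := fun j => -(j * (c + j - 1)) * T (n + 2) j / (n + 2)
  have hn : (n + 2 : ℂ) ≠ 0 := by exact_mod_cast (n + 1).succ_ne_zero
  have hterm : ∀ j, (c + n + 1) * T (n + 2) j - (c - 2 * b) * T (n + 1) j - (n + 1) * T n j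
      = G (j + 1) - G j := by
    intro j
    have h₂ := F2term_mul_succ_left (n + 1) b c j
    have h₁ := F2term_mul_succ_left n b c j
    have hs := F2term_succ_mul hc (n + 2) b j
    simp only [G, T] at h₁ h₂ hs ⊢
    push_cast at h₁ h₂ hs ⊢
    field_simp
    linear_combination -(n + 2) * h₁ - (n + 1 - j + c - 2 * b) * h₂ + hs
  have hsum := sum_range_sub G (n + 3)
  rw [← sum_congr rfl fun j _ => hterm j, sum_sub_distrib, sum_sub_distrib, ← mul_sum, ← mul_sum,
    ← mul_sum, ← F2_eq_sum_F2term b c le_rfl, ← F2_eq_sum_F2term b c (by omega),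
    ← F2_eq_sum_F2term b c (by omega)] at hsum
  have hG : G (n + 3) = 0 ∧ G 0 = 0 := by
    simp [G, T, F2term_eq_zero b c (show n + 2 < n + 3 by omega)]
  rw [hG.1, hG.2] at hsum
  linear_combination hsum

noncomputable def threeTermPoly {R : Type*} [Semiring R] (β : ℕ → R) : ℕ → R[X]
  | 0 => 1
  | 1 => X
  | n + 2 => X * threeTermPoly β (n + 1) + C (β n) * threeTermPoly β n

namespace threeTermPoly

variable {R : Type*}

theorem monic_and_natDegree [Semiring R] [Nontrivial R] (β : ℕ → R) (n : ℕ) :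
    (threeTermPoly β n).Monic ∧ (threeTermPoly β n).natDegree = n := by
  induction n using Nat.twoStepInduction with
  | zero => simp [threeTermPoly]
  | one => simp [threeTermPoly]
  | more n _ ih₁ =>
    obtain ⟨hmonic₁, hdeg₁⟩ := ih₁
    have hlead : (X * threeTermPoly β (n + 1)).Monic := monic_X.mul hmonic₁
    have hlead_deg : (X * threeTermPoly β (n + 1)).natDegree = n + 2 := by
      rw [monic_X.natDegree_mul hmonic₁, natDegree_X, hdeg₁]; ring
    have hlt : degree (C (β n) * threeTermPoly β n) < degree (X * threeTermPoly β (n + 1)) := by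
      refine degree_lt_degree ?_
      rw [hlead_deg]
      exact (natDegree_C_mul_le _ _).trans_lt (by omega)
    exact ⟨hlead.add_of_left hlt, (natDegree_add_eq_left_of_degree_lt hlt).trans hlead_deg⟩

theorem eq_eval [CommSemiring R] {β : ℕ → R} {t : R} {u : ℕ → R} (h₀ : u 0 = 1) (h₁ : u 1 = t)
    (hrec : ∀ n, u (n + 2) = t * u (n + 1) + β n * u n) (n : ℕ) :
    u n = (threeTermPoly β n).eval t := by
  induction n using Nat.twoStepInduction with
  | zero => simp [threeTermPoly, h₀]
  | one => simp [threeTermPoly, h₁]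
  | more n ih₀ ih₁ => simp [threeTermPoly, hrec, ih₀, ih₁]

theorem eval_ne_zero {β : ℕ → ℝ} (hβ : ∀ n, 0 ≤ β n) {t : ℂ} (ht : t.re ≠ 0) (n : ℕ) :
    (threeTermPoly (fun k => (β k : ℂ)) n).eval t ≠ 0 := by
  set u : ℕ → ℂ := fun k => (threeTermPoly (fun k => (β k : ℂ)) k).eval t
  have key : ∀ k, 0 < t.re * (u (k + 1) * star (u k)).re := by
    intro k
    induction k with
    | zero => simpa [u, threeTermPoly] using mul_self_pos.mpr ht
    | succ k ih =>
      have hu : u (k + 1) ≠ 0 := fun h => by simp [h] at ih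
      have hexpand : (u (k + 2) * star (u (k + 1))).re
          = t.re * Complex.normSq (u (k + 1)) + β k * (u (k + 1) * star (u k)).re := by
        simp only [u, threeTermPoly, eval_add, eval_mul, eval_X, eval_C]
        simp [Complex.normSq_apply]
        ring
      rw [hexpand, mul_add, ← mul_assoc, mul_left_comm _ (β k : ℝ)]
      exact add_pos_of_pos_of_nonneg (mul_pos (mul_self_pos.mpr ht) (Complex.normSq_pos.mpr hu))
        (mul_nonneg (hβ k) ih.le)
  intro h
  simpa [u, h] using key n

end threeTermPoly

theorem ascC_mul_F2_eq_eval {c : ℂ} (hc : ∀ k : ℕ, c + k ≠ 0) (b : ℂ) (n : ℕ) :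
    ascC c n * F2 n b c = (threeTermPoly (fun k => (k + 1) * (c + k)) n).eval (c - 2 * b) := by
  refine threeTermPoly.eq_eval (u := fun n => ascC c n * F2 n b c) ?_ ?_ (fun n => ?_) n
  · simp [F2, ascC_zero]
  · have : c ≠ 0 := by simpa using hc 0
    simp [F2, ascC_succ, ascC_zero, sum_range_succ]
    field_simp
    ring
  · rw [show ascC c (n + 2) = ascC c (n + 1) * (c + n + 1) by rw [ascC_succ]; push_cast; ring,
      mul_assoc, F2_contiguous hc, ascC_succ]
    ring

theorem F2_eq_inv_ascC_mul_eval {μ : ℝ} (hμ : -(1 / 2) < μ) (n : ℕ) (s : ℂ) :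
    F2 n ((μ + s) / 2) (μ + 1 / 2) = (ascC (μ + 1 / 2) n)⁻¹ *
      (threeTermPoly (fun k => (((k + 1) * (μ + 1 / 2 + k) : ℝ) : ℂ)) n).eval (1 / 2 - s) := by
  have hc := add_natCast_ne_zero_of_re_pos (c := μ + 1 / 2) (by simp; linarith)
  have hβ : (fun k : ℕ => (k + 1) * ((μ : ℂ) + 1 / 2 + k))
      = fun k : ℕ => (((k + 1) * (μ + 1 / 2 + k) : ℝ) : ℂ) := by
    funext k
    push_cast
    ring
  rw [eq_inv_mul_iff_mul_eq₀ (ascC_ne_zero hc n), ascC_mul_F2_eq_eval hc, hβ]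
  congr 1
  ring

theorem stmt6 (μ : ℝ) (hμ : μ > -(1/2)) (n : ℕ) :
    (∃ P : Polynomial ℂ, P.natDegree = n ∧
        ∀ s : ℂ, P.eval s = F2 n (((μ : ℂ) + s) / 2) ((μ : ℂ) + 1/2)) ∧
    ∀ s : ℂ, F2 n (((μ : ℂ) + s) / 2) ((μ : ℂ) + 1/2) = 0 → s.re = 1/2 := by
  have hc := add_natCast_ne_zero_of_re_pos (c := μ + 1 / 2) (by simp; linarith)
  have hβ_nonneg (k : ℕ) : 0 ≤ ((k : ℝ) + 1) * (μ + 1 / 2 + k) :=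
    mul_nonneg (by positivity) (by linarith [(k.cast_nonneg : (0 : ℝ) ≤ k)])
  set Q := threeTermPoly (fun k => (((k + 1) * (μ + 1 / 2 + k) : ℝ) : ℂ)) n
  refine ⟨⟨C (ascC (μ + 1 / 2) n)⁻¹ * Q.comp (C (1 / 2) - X), ?_, fun s => ?_⟩, fun s hs => ?_⟩
  · rw [natDegree_C_mul (inv_ne_zero (ascC_ne_zero hc n)), natDegree_comp,
      (threeTermPoly.monic_and_natDegree _ n).2, natDegree_sub_eq_right_of_natDegree_lt (by simp),
      natDegree_X, mul_one]
  · rw [F2_eq_inv_ascC_mul_eval hμ, eval_mul, eval_C, eval_comp, eval_sub, eval_C, eval_X]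
  · by_contra hre
    refine threeTermPoly.eval_ne_zero hβ_nonneg (t := 1 / 2 - s) ?_ n ?_
    · rw [Complex.sub_re, sub_ne_zero]
      norm_num
      exact Ne.symm hre
    · rw [F2_eq_inv_ascC_mul_eval hμ, mul_eq_zero] at hs
      exact hs.resolve_left (inv_ne_zero (ascC_ne_zero hc n))
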